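/- For all sufficiently large k (in particular, large enough that 4·√k/log k ≥ g(x₀) and k > k₀), one has f(k)² ≥ (1/4)·g⁻¹(4·√k/log k), where g⁻¹ denotes the inverse of the restriction of g to [x₀,∞). -/

import Mathlib

/-!
Write `L = log ∘ M`, so that `J x = exp (L x / x)` and `g x = x * J x ^ 2`. For `N = N(k)` put
`r = N² J'(N) / J(N)`; differentiating `J` gives `r = N L'(N) - L(N)`, the defining equation
of `N` becomes `k = r * exp (2 L'(N))`, and `f(k)² = r / log k`. Convexity of `L` gives the
tangent bound `L y ≥ L'(N) y - r` for all `y > 0`. At `y = z := 4 r / log k` it yields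
`g z ≥ 4 √k / log k`, hence `g⁻¹(4 √k / log k) ≤ z` since `g` increases on `[x₀, ∞)`.
At `y = x₀` it yields `log k ≤ log r + 2 (L x₀ + r) / x₀`, which forces `r → ∞` and then
`x₀ ≤ z` for large `k`.
-/

open Real Set Filter Topology Asymptotics

theorem ConvexOn.add_deriv_mul_sub_le {S : Set ℝ} {f : ℝ → ℝ} {x y : ℝ}
    (hf : ConvexOn ℝ S f) (hx : x ∈ S) (hy : y ∈ S) (hfx : DifferentiableAt ℝ f x) :
    f x + deriv f x * (y - x) ≤ f y := by
  rcases lt_trichotomy x y with hxy | rfl | hyx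
  · have := hf.deriv_le_slope hx hy hxy hfx
    rw [slope_def_field, le_div_iff₀ (sub_pos.2 hxy)] at this
    linarith
  · simp
  · have := hf.slope_le_deriv hy hx hyx hfx
    rw [slope_def_field, div_le_iff₀ (sub_pos.2 hyx)] at this
    linarith

theorem strictMonoOn_mul_sq {J : ℝ → ℝ} {x₀ : ℝ} (hx₀ : 0 < x₀)
    (hJpos : ∀ x ≥ x₀, 0 < J x) (hJ : MonotoneOn J (Ici x₀)) :
    StrictMonoOn (fun x => x * J x ^ 2) (Ici x₀) := by
  intro x hx y hy hxy
  have hJx := hJpos x hx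
  have hJxy := hJ hx hy hxy.le
  have : 0 < y := hx₀.trans_le (hx.trans hxy.le)
  calc x * J x ^ 2 < y * J x ^ 2 := by gcongr
    _ ≤ y * J y ^ 2 := by gcongr

theorem four_sqrt_div_log_le_mul_exp_sq {r k z G a : ℝ} (hr : 0 < r) (hk : 1 < k)
    (hkG : r * exp (2 * G) = k) (hz : z * log k = 4 * r) (ha : G * z - r ≤ a) :
    4 * √k / log k ≤ z * exp (a / z) ^ 2 := by
  have hlog : 0 < log k := log_pos hk
  have hzdef : z = 4 * r / log k := eq_div_of_mul_eq hlog.ne' hz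
  have hz0 : 0 < z := by rw [hzdef]; positivity
  have hsqrt : exp (log k / 2) = √k := by
    rw [sqrt_eq_rpow, rpow_def_of_pos (by linarith)]
    ring_nf
  calc 4 * √k / log k = z * exp (2 * G - log k / 2) := by
        have hexp : exp (2 * G) = k / r := by rw [← hkG]; field_simp
        rw [exp_sub, hsqrt, hexp, hzdef]
        field_simp
        exact sq_sqrt (by linarith)
    _ ≤ z * exp (a / z) ^ 2 := by
        rw [← exp_nat_mul]
        gcongr
        push_cast
        rw [mul_div_assoc', le_div_iff₀ hz0]
        nlinarith

theorem eventually_mul_log_add_le (a c : ℝ) : ∀ᶠ r in atTop, a * log r + c ≤ r := by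
  filter_upwards [((isLittleO_log_id_atTop.const_mul_left a).add
    (isLittleO_const_id_atTop c)).bound one_pos, eventually_ge_atTop 0] with r hr hr0
  simp only [norm_eq_abs, id_eq, one_mul, abs_of_nonneg hr0] at hr
  exact (le_abs_self _).trans hr

theorem eventually_mul_log_le_of_mul_log_le {R : ℝ → ℝ} {a c : ℝ} (ha : 0 < a)
    (h : ∀ᶠ k in atTop, 0 < R k ∧ a * log k ≤ a * log (R k) + c + 2 * R k) :
    ∀ᶠ k in atTop, a * log k ≤ 4 * R k := by
  have hR : Tendsto R atTop atTop := by
    refine tendsto_atTop_mono' _ (h.mono fun k ⟨hRk, hk⟩ => ?_)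
      (((tendsto_log_atTop.const_mul_atTop ha).atTop_add
        (tendsto_const_nhds (x := -c))).atTop_div_const (by positivity : 0 < a + 2))
    have := log_le_sub_one_of_pos hRk
    rw [div_le_iff₀ (by positivity)]
    nlinarith
  filter_upwards [h, hR.eventually (eventually_mul_log_add_le a c)] with k ⟨hRk, hk⟩ hk'
  linarith

theorem tendsto_four_mul_sqrt_div_log_atTop :
    Tendsto (fun k => 4 * √k / log k) atTop atTop := by
  refine (((tendsto_exp_div_pow_atTop 1).comp (tendsto_log_atTop.atTop_div_const two_pos)
    ).const_mul_atTop two_pos).congr' ((eventually_gt_atTop 0).mono fun k hk => ?_)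
  simp only [Function.comp_apply, pow_one]
  rw [sqrt_eq_rpow, rpow_def_of_pos hk]
  field_simp
  ring_nf

section LogComp

variable {M : ℝ → ℝ} {x : ℝ}

theorem differentiableAt_log_comp (hMpos : ∀ x > (0 : ℝ), 0 < M x)
    (hMd : DifferentiableOn ℝ M (Ioi 0)) (hx : 0 < x) :
    DifferentiableAt ℝ (fun y => log (M y)) x :=
  (hMd.differentiableAt (Ioi_mem_nhds hx)).log (hMpos x hx).ne'

theorem convexOn_log_comp (hMpos : ∀ x > (0 : ℝ), 0 < M x)
    (hMd : DifferentiableOn ℝ M (Ioi 0))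
    (hlogconv : ∀ x > (0 : ℝ), 0 < deriv (deriv (fun y => log (M y))) x) :
    ConvexOn ℝ (Ioi 0) (fun y => log (M y)) :=
  (strictConvexOn_of_deriv2_pos' (convex_Ioi 0)
    (fun x hx => (differentiableAt_log_comp hMpos hMd hx).continuousAt.continuousWithinAt)
    (fun x hx => by simpa using hlogconv x hx)).convexOn

theorem eq_exp_log_div_of_eq_rpow {J : ℝ → ℝ} (hMpos : ∀ x > (0 : ℝ), 0 < M x)
    (hJ : ∀ x > (0 : ℝ), J x = M x ^ (1 / x)) : ∀ x > 0, J x = exp (log (M x) / x) :=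
  fun x hx => by rw [hJ x hx, rpow_def_of_pos (hMpos x hx), mul_one_div]

theorem eq_mul_sq_of_eq_rpow {J g : ℝ → ℝ} (hMpos : ∀ x > (0 : ℝ), 0 < M x)
    (hJ : ∀ x > (0 : ℝ), J x = M x ^ (1 / x))
    (hg : ∀ x > (0 : ℝ), g x = x * M x ^ (2 / x)) : ∀ x > 0, g x = x * J x ^ 2 :=
  fun x hx => by
    rw [hg x hx, hJ x hx, ← rpow_natCast, ← rpow_mul (hMpos x hx).le]
    ring_nf

end LogComp

section ExpDivSelf

variable {L J : ℝ → ℝ} {x : ℝ}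

theorem hasDerivAt_exp_div_self (hL : DifferentiableAt ℝ L x) (hx : x ≠ 0) :
    HasDerivAt (fun y => exp (L y / y)) (exp (L x / x) * ((x * deriv L x - L x) / x ^ 2)) x := by
  refine (hL.hasDerivAt.div (hasDerivAt_id x) hx).exp.congr_deriv ?_
  simp only [Pi.div_apply, id_eq]
  ring

theorem hasDerivAt_of_eq_exp_div_self (hJ : ∀ y > 0, J y = exp (L y / y))
    (hL : DifferentiableAt ℝ L x) (hx : 0 < x) :
    HasDerivAt J (J x * ((x * deriv L x - L x) / x ^ 2)) x := by
  rw [hJ x hx]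
  exact (hasDerivAt_exp_div_self hL hx.ne').congr_of_eventuallyEq
    (eventually_of_mem (Ioi_mem_nhds hx) hJ)

theorem sq_mul_deriv_div_eq (hJ : ∀ y > 0, J y = exp (L y / y))
    (hL : DifferentiableAt ℝ L x) (hx : 0 < x) :
    x ^ 2 * (deriv J x / J x) = x * deriv L x - L x := by
  rw [(hasDerivAt_of_eq_exp_div_self hJ hL hx).deriv, hJ x hx]
  field_simp

theorem strictMonoOn_mul_sq_of_deriv_pos (hJ : ∀ y > 0, J y = exp (L y / y))
    (hLd : ∀ x > 0, DifferentiableAt ℝ L x) {x₀ : ℝ} (hx₀ : 0 < x₀)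
    (hJ' : ∀ x > x₀, 0 < deriv J x) : StrictMonoOn (fun x => x * J x ^ 2) (Ici x₀) := by
  have hJmono : StrictMonoOn J (Ici x₀) :=
    strictMonoOn_of_deriv_pos (convex_Ici x₀)
      (fun x hx => (hasDerivAt_of_eq_exp_div_self hJ (hLd x (hx₀.trans_le hx))
        (hx₀.trans_le hx)).continuousAt.continuousWithinAt)
      (by simpa using hJ')
  refine strictMonoOn_mul_sq hx₀ (fun x hx => ?_) hJmono.monotoneOn
  rw [hJ x (hx₀.trans_le hx)]
  positivity

variable {N r k : ℝ}

theorem deriv_mul_sub_le_of_convexOn (hLconv : ConvexOn ℝ (Ioi 0) L)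
    (hJ : ∀ y > 0, J y = exp (L y / y)) (hN : 0 < N) (hLN : DifferentiableAt ℝ L N)
    (hr : N ^ 2 * (deriv J N / J N) = r) {y : ℝ} (hy : 0 < y) :
    deriv L N * y - r ≤ L y := by
  have := hLconv.add_deriv_mul_sub_le hN hy hLN
  rw [← hr, sq_mul_deriv_div_eq hJ hLN hN]
  linarith

theorem mul_exp_eq_of_eq_exp_div_self (hJ : ∀ y > 0, J y = exp (L y / y)) (hN : 0 < N)
    (hLN : DifferentiableAt ℝ L N) (hr : N ^ 2 * (deriv J N / J N) = r)
    (hk : N ^ 2 * J N * deriv J N * exp (2 * N * deriv J N / J N) = k) :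
    r * exp (2 * deriv L N) = k := by
  have hJN : 0 < J N := by rw [hJ N hN]; positivity
  have hrL := sq_mul_deriv_div_eq hJ hLN hN
  have hexp : J N ^ 2 * exp (2 * r / N) = exp (2 * deriv L N) := by
    rw [hJ N hN, ← exp_nat_mul, ← exp_add, ← hr, hrL]
    congr 1
    field_simp
    ring
  rw [← hk, ← hexp, ← hr]
  field_simp

theorem mul_log_le_of_convexOn (hLconv : ConvexOn ℝ (Ioi 0) L)
    (hJ : ∀ y > 0, J y = exp (L y / y)) (hN : 0 < N) (hLN : DifferentiableAt ℝ L N)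
    (hr : N ^ 2 * (deriv J N / J N) = r) (hr0 : 0 < r)
    (hk : N ^ 2 * J N * deriv J N * exp (2 * N * deriv J N / J N) = k)
    {x₀ : ℝ} (hx₀ : 0 < x₀) :
    x₀ * log k ≤ x₀ * log r + 2 * L x₀ + 2 * r := by
  have := deriv_mul_sub_le_of_convexOn hLconv hJ hN hLN hr hx₀
  rw [← mul_exp_eq_of_eq_exp_div_self hJ hN hLN hr hk, log_mul hr0.ne' (exp_pos _).ne', log_exp]
  linarith

theorem four_sqrt_div_log_le_of_convexOn (hLconv : ConvexOn ℝ (Ioi 0) L)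
    (hJ : ∀ y > 0, J y = exp (L y / y)) (hN : 0 < N) (hLN : DifferentiableAt ℝ L N)
    (hr : N ^ 2 * (deriv J N / J N) = r) (hr0 : 0 < r)
    (hk : N ^ 2 * J N * deriv J N * exp (2 * N * deriv J N / J N) = k) (hk1 : 1 < k) :
    4 * √k / log k ≤ 4 * r / log k * J (4 * r / log k) ^ 2 := by
  have hlog := log_pos hk1
  have hz0 : 0 < 4 * r / log k := by positivity
  rw [hJ _ hz0]
  exact four_sqrt_div_log_le_mul_exp_sq hr0 hk1 (mul_exp_eq_of_eq_exp_div_self hJ hN hLN hr hk)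
    (div_mul_cancel₀ _ hlog.ne') (deriv_mul_sub_le_of_convexOn hLconv hJ hN hLN hr hz0)

end ExpDivSelf

theorem f_sq_lower_bound_general (M J g : ℝ → ℝ)
    (hMpos : ∀ x > (0 : ℝ), 0 < M x)
    (hMsmooth : ContDiffOn ℝ 2 M (Set.Ioi 0))
    (hlogconv : ∀ x > (0 : ℝ), 0 < deriv (deriv (fun y => Real.log (M y))) x)
    (hJ : ∀ x > (0 : ℝ), J x = M x ^ (1 / x))
    (hg : ∀ x > (0 : ℝ), g x = x * M x ^ (2 / x))
    (x₀ : ℝ) (hx₀ : 0 < x₀) (hJ' : ∀ x > x₀, 0 < deriv J x)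
    (ginv : ℝ → ℝ)
    (hginv_right : ∀ y ∈ Set.Ici (g x₀), ginv y ∈ Set.Ici x₀ ∧ g (ginv y) = y)
    (Nfun f : ℝ → ℝ)
    (hNfun : ∀ k : ℝ,
      x₀ ^ 2 * J x₀ * deriv J x₀ * Real.exp (2 * x₀ * deriv J x₀ / J x₀) < k →
      x₀ < Nfun k ∧
        (Nfun k) ^ 2 * J (Nfun k) * deriv J (Nfun k) *
          Real.exp (2 * Nfun k * deriv J (Nfun k) / J (Nfun k)) = k)
    (hf : ∀ k, f k = Nfun k * Real.sqrt (deriv J (Nfun k) / J (Nfun k)) /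
      Real.sqrt (Real.log k)) :
    ∃ K : ℝ, ∀ k ≥ K,
      g x₀ ≤ 4 * Real.sqrt k / Real.log k ∧
      x₀ ^ 2 * J x₀ * deriv J x₀ * Real.exp (2 * x₀ * deriv J x₀ / J x₀) < k ∧
      (1 / 4) * ginv (4 * Real.sqrt k / Real.log k) ≤ (f k) ^ 2 := by
  have hMd : DifferentiableOn ℝ M (Ioi 0) := hMsmooth.differentiableOn (by norm_num)
  have hLd := fun x (hx : 0 < x) => differentiableAt_log_comp hMpos hMd hx
  have hLconv := convexOn_log_comp hMpos hMd hlogconv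
  have hJL := eq_exp_log_div_of_eq_rpow hMpos hJ
  have hgJ := eq_mul_sq_of_eq_rpow hMpos hJ hg
  have hgmono : StrictMonoOn g (Ici x₀) :=
    (strictMonoOn_mul_sq_of_deriv_pos hJL hLd hx₀ hJ').congr fun x hx =>
      (hgJ x (hx₀.trans_le hx)).symm
  set k₀ := x₀ ^ 2 * J x₀ * deriv J x₀ * exp (2 * x₀ * deriv J x₀ / J x₀)
  set R : ℝ → ℝ := fun k => Nfun k ^ 2 * (deriv J (Nfun k) / J (Nfun k))
  have hNpos : ∀ k > k₀, 0 < Nfun k := fun k hk => hx₀.trans (hNfun k hk).1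
  have hJ'J : ∀ k > k₀, 0 < deriv J (Nfun k) / J (Nfun k) := fun k hk =>
    div_pos (hJ' _ (hNfun k hk).1) (by rw [hJL _ (hNpos k hk)]; positivity)
  have hRpos : ∀ k > k₀, 0 < R k := fun k hk => mul_pos (pow_pos (hNpos k hk) 2) (hJ'J k hk)
  have hlogR : ∀ᶠ k in atTop, x₀ * log k ≤ 4 * R k :=
    eventually_mul_log_le_of_mul_log_le hx₀ ((eventually_gt_atTop k₀).mono fun k hk =>
      ⟨hRpos k hk, mul_log_le_of_convexOn hLconv hJL (hNpos k hk) (hLd _ (hNpos k hk)) rfl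
        (hRpos k hk) (hNfun k hk).2 hx₀⟩)
  refine eventually_atTop.1 ?_
  filter_upwards [eventually_gt_atTop k₀, eventually_gt_atTop 1, hlogR,
    tendsto_four_mul_sqrt_div_log_atTop.eventually_ge_atTop (g x₀)] with k hk₀ hk1 hlogk hA
  obtain ⟨hx₀A, hgA⟩ := hginv_right _ hA
  have hlog := log_pos hk1
  have hz : x₀ ≤ 4 * R k / log k := (le_div_iff₀ hlog).2 (by linarith)
  have hgz : 4 * √k / log k ≤ g (4 * R k / log k) := by
    rw [hgJ _ (hx₀.trans_le hz)]
    exact four_sqrt_div_log_le_of_convexOn hLconv hJL (hNpos k hk₀) (hLd _ (hNpos k hk₀)) rfl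
      (hRpos k hk₀) (hNfun k hk₀).2 hk1
  have hginv := (hgmono.le_iff_le hx₀A hz).1 (hgA.symm ▸ hgz)
  refine ⟨hA, hk₀, ?_⟩
  rw [hf k, div_pow, mul_pow, sq_sqrt (hJ'J k hk₀).le, sq_sqrt hlog.le]
  change _ ≤ R k / log k
  linarith [show 4 * R k / log k = 4 * (R k / log k) from mul_div_assoc _ _ _]

/-- For all sufficiently large `k` (in particular, large enough that
`4·√k/log k ≥ g(x₀)` and `k > k₀`), one has `f(k)² ≥ (1/4)·g⁻¹(4·√k/log k)`, where
`g⁻¹` denotes the inverse of the restriction of `g` to `[x₀,∞)`. -/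
theorem f_sq_lower_bound (M J g : ℝ → ℝ)
    (hMpos : ∀ x > (0 : ℝ), 0 < M x)
    (hMsmooth : ContDiffOn ℝ 2 M (Set.Ioi 0))
    (hlogconv : ∀ x > (0 : ℝ), 0 < deriv (deriv (fun y => Real.log (M y))) x)
    (hJ : ∀ x > (0 : ℝ), J x = M x ^ (1 / x))
    (hJunb : ∀ B : ℝ, ∃ x > (0 : ℝ), B < J x)
    (hg : ∀ x > (0 : ℝ), g x = x * M x ^ (2 / x))
    (x₀ : ℝ) (hx₀ : 0 < x₀) (hJ' : ∀ x > x₀, 0 < deriv J x)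
    (ginv : ℝ → ℝ)
    (hginv_left : ∀ x ∈ Set.Ici x₀, ginv (g x) = x)
    (hginv_right : ∀ y ∈ Set.Ici (g x₀), ginv y ∈ Set.Ici x₀ ∧ g (ginv y) = y)
    (Nfun f : ℝ → ℝ)
    (hNfun : ∀ k : ℝ,
      x₀ ^ 2 * J x₀ * deriv J x₀ * Real.exp (2 * x₀ * deriv J x₀ / J x₀) < k →
      x₀ < Nfun k ∧
        (Nfun k) ^ 2 * J (Nfun k) * deriv J (Nfun k) *
          Real.exp (2 * Nfun k * deriv J (Nfun k) / J (Nfun k)) = k)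
    (hf : ∀ k, f k = Nfun k * Real.sqrt (deriv J (Nfun k) / J (Nfun k)) /
      Real.sqrt (Real.log k)) :
    ∃ K : ℝ, ∀ k ≥ K,
      g x₀ ≤ 4 * Real.sqrt k / Real.log k ∧
      x₀ ^ 2 * J x₀ * deriv J x₀ * Real.exp (2 * x₀ * deriv J x₀ / J x₀) < k ∧
      (1 / 4) * ginv (4 * Real.sqrt k / Real.log k) ≤ (f k) ^ 2 :=
  f_sq_lower_bound_general M J g hMpos hMsmooth hlogconv hJ hg x₀ hx₀ hJ' ginv hginv_right Nfun f
    hNfun hf
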